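/- arXiv:1701.08014 — 5 statements merged into one kernel-verified Lean document; each statement's English description precedes it below -/
import Mathlib

section
/- Let {e_i}_{i=1}^N be an orthonormal basis of an N-dimensional real inner product space H with N > 2, and for each i let W_i = e_i^⊥ be the hyperplane orthogonal to e_i. Then for every nonempty subset I ⊆ {1,...,N-1}, the family of subspaces {W_i}_{i∈I} does not do norm retrieval. -/
open scoped RealInnerProductSpace

noncomputable section

/-- A family of subspaces of a finite-dimensional real inner product space does
norm retrieval (via their orthogonal projections) if equality of the norms of all the
orthogonal projections of two vectors implies equality of the norms of the vectors. -/
def DoesNormRetrieval {H : Type*} [NormedAddCommGroup H] [InnerProductSpace ℝ H]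
    [FiniteDimensional ℝ H] {ι : Type*} (W : ι → Submodule ℝ H) : Prop :=
  ∀ x y : H, (∀ i : ι, ‖Submodule.orthogonalProjectionOnto (W i) x‖ = ‖Submodule.orthogonalProjectionOnto (W i) y‖) →
    ‖x‖ = ‖y‖

/-!
Let `j` be an index outside `I` and `n = |I|`. The vectors `x = √n • e j` and
`y = e j + ∑_{i ∈ I} e i` satisfy `‖P_i x‖² = ‖x‖² - ⟪e i, x⟫² = n` and
`‖P_i y‖² = ‖y‖² - ⟪e i, y⟫² = (n + 1) - 1 = n` for every `i ∈ I`, where `P_i` is the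
projection onto `(e i)ᗮ`, while `‖x‖² = n ≠ n + 1 = ‖y‖²`.
-/

section

variable {H : Type*} [NormedAddCommGroup H] [InnerProductSpace ℝ H]

theorem Submodule.norm_orthogonalProjectionOnto_orthogonal_unit_singleton_sq {u : H}
    (hu : ‖u‖ = 1) (v : H) :
    ‖(ℝ ∙ u)ᗮ.orthogonalProjectionOnto v‖ ^ 2 = ‖v‖ ^ 2 - ⟪u, v⟫ ^ 2 := by
  have hpar : ‖(ℝ ∙ u).orthogonalProjectionOnto v‖ = |⟪u, v⟫| := by
    change ‖(ℝ ∙ u).starProjection v‖ = _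
    rw [starProjection_unit_singleton ℝ hu, norm_smul, hu, mul_one, Real.norm_eq_abs]
  rw [norm_sq_eq_add_norm_sq_projection v (ℝ ∙ u), hpar, sq_abs]
  ring

theorem Orthonormal.inner_right_sum_one {ι : Type*} {v : ι → H} (hv : Orthonormal ℝ v)
    {s : Finset ι} {i : ι} (hi : i ∈ s) : ⟪v i, ∑ k ∈ s, v k⟫ = 1 := by
  simpa using hv.inner_right_sum (fun _ => (1 : ℝ)) hi

theorem Orthonormal.norm_sum_sq {ι : Type*} {v : ι → H} (hv : Orthonormal ℝ v) (s : Finset ι) :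
    ‖∑ k ∈ s, v k‖ ^ 2 = s.card := by
  rw [← real_inner_self_eq_norm_sq, sum_inner,
    Finset.sum_congr rfl fun _ hk => hv.inner_right_sum_one hk]
  simp

theorem Orthonormal.not_doesNormRetrieval_orthogonal [FiniteDimensional ℝ H] {ι : Type*}
    {e : ι → H} (he : Orthonormal ℝ e) {I : Set ι} (hI : I.Finite) {j : ι} (hj : j ∉ I) :
    ¬ DoesNormRetrieval (fun i : I => (ℝ ∙ e i)ᗮ) := by
  classical
  intro h
  set s := hI.toFinset
  have hjs : j ∉ s := by simpa [s] using hj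
  set x : H := √(s.card : ℝ) • e j
  set y : H := ∑ k ∈ insert j s, e k
  have hx : ‖x‖ ^ 2 = s.card := by
    rw [norm_smul, he.1 j, mul_one, Real.norm_eq_abs, sq_abs, Real.sq_sqrt (Nat.cast_nonneg _)]
  have hy : ‖y‖ ^ 2 = s.card + 1 := by
    rw [he.norm_sum_sq, Finset.card_insert_of_notMem hjs, Nat.cast_succ]
  have hPx (i : I) : ‖(ℝ ∙ e i)ᗮ.orthogonalProjectionOnto x‖ ^ 2 = s.card := by
    have hij : (i : ι) ≠ j := fun hij => hj (hij ▸ i.2)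
    rw [Submodule.norm_orthogonalProjectionOnto_orthogonal_unit_singleton_sq (he.1 i), hx,
      real_inner_smul_right, he.2 hij]
    ring
  have hPy (i : I) : ‖(ℝ ∙ e i)ᗮ.orthogonalProjectionOnto y‖ ^ 2 = s.card := by
    have hi : (i : ι) ∈ insert j s := Finset.mem_insert_of_mem (by simp [s])
    rw [Submodule.norm_orthogonalProjectionOnto_orthogonal_unit_singleton_sq (he.1 i), hy,
      he.inner_right_sum_one hi]
    ring
  have hxy : ‖x‖ = ‖y‖ :=
    h x y fun i => (sq_eq_sq₀ (norm_nonneg _) (norm_nonneg _)).1 ((hPx i).trans (hPy i).symm)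
  have := hy ▸ hx ▸ congrArg (· ^ 2) hxy
  simp at this

end

theorem stmt_4_general {H : Type*} [NormedAddCommGroup H] [InnerProductSpace ℝ H]
    [FiniteDimensional ℝ H] {N : ℕ} (hN : 2 < N)
    (e : OrthonormalBasis (Fin N) ℝ H)
    (I : Set (Fin N))
    (hI : ∀ i ∈ I, (i : ℕ) < N - 1) :
    ¬ DoesNormRetrieval (fun i : I => (ℝ ∙ e i)ᗮ) :=
  e.orthonormal.not_doesNormRetrieval_orthogonal I.toFinite
    (j := ⟨N - 1, by omega⟩) fun hj => (hI _ hj).false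

/-- If `{e_i}_{i=1}^N` is an orthonormal basis of an `N`-dimensional real inner product
space with `N > 2` and `W_i = e_i^⊥`, then for every nonempty subset `I` of the first
`N - 1` indices, the family `{W_i}_{i ∈ I}` fails norm retrieval. -/
theorem stmt_4 {H : Type*} [NormedAddCommGroup H] [InnerProductSpace ℝ H]
    [FiniteDimensional ℝ H] {N : ℕ} (hN : 2 < N)
    (hdim : Module.finrank ℝ H = N)
    (e : OrthonormalBasis (Fin N) ℝ H)
    (I : Set (Fin N)) (hne : I.Nonempty)
    (hI : ∀ i ∈ I, (i : ℕ) < N - 1) :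
    ¬ DoesNormRetrieval (fun i : I => (ℝ ∙ e i)ᗮ) :=
  stmt_4_general hN e I hI
end
end

section
/- For every N ≥ 2, there exist three proper subspaces W_1, W_2, W_3 of ℝ^N, each of codimension one (i.e. dim W_i = N - 1), such that the family {W_1, W_2, W_3} does norm retrieval. -/
/-!
For a nonzero `w`, the projection onto the hyperplane `wᗮ` satisfies
`‖P x‖² = ‖x‖² - ⟪w, x⟫² / ‖w‖²`. So if `x` and `y` have projections of equal norms onto `uᗮ`,
`vᗮ` and `(u + v)ᗮ` for orthonormal `u`, `v`, then, with `a = ‖x‖² - ‖y‖²`, the quadratic form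
`w ↦ ⟪w, x⟫² - ⟪w, y⟫²` equals `a ‖w‖²` at `w = u, v, u + v`. Polarization gives
`⟪u, x⟫⟪v, x⟫ = ⟪u, y⟫⟪v, y⟫`, and eliminating the products yields
`a (⟪u, x⟫² + ⟪v, x⟫² + ⟪u, y⟫² + ⟪v, y⟫²) = 0`, which forces `a = 0`.
-/

open scoped RealInnerProductSpace

noncomputable section

theorem eq_zero_of_sq_sub_sq_eq {a p q r s : ℝ} (h₀ : p ^ 2 - r ^ 2 = a) (h₁ : q ^ 2 - s ^ 2 = a)
    (h₂ : (p + q) ^ 2 - (r + s) ^ 2 = 2 * a) : a = 0 := by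
  have hpq : p * q = r * s := by linear_combination (h₂ - h₀ - h₁) / 2
  have hr : a * (r ^ 2 + s ^ 2 + a) = 0 := by
    linear_combination (-q ^ 2) * h₀ - r ^ 2 * h₁ + (p * q + r * s) * hpq - a * h₁
  have hp : a * (p ^ 2 + q ^ 2 - a) = 0 := by linear_combination hr + a * h₀ + a * h₁
  have hsum : a * (p ^ 2 + q ^ 2 + r ^ 2 + s ^ 2) = 0 := by linear_combination hr + hp
  rcases mul_eq_zero.mp hsum with ha | hzero
  · exact ha
  · nlinarith [sq_nonneg p, sq_nonneg q, sq_nonneg r, sq_nonneg s]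

section

variable {H : Type*} [NormedAddCommGroup H] [InnerProductSpace ℝ H]

theorem norm_sq_orthogonalProjectionOnto_orthogonal_span_singleton (v x : H) :
    ‖(ℝ ∙ v)ᗮ.orthogonalProjectionOnto x‖ ^ 2 = ‖x‖ ^ 2 - ⟪v, x⟫ ^ 2 / ‖v‖ ^ 2 := by
  have hproj : ‖(ℝ ∙ v).orthogonalProjectionOnto x‖ ^ 2 = ⟪v, x⟫ ^ 2 / ‖v‖ ^ 2 := by
    rw [Submodule.coe_norm, ← Submodule.starProjection_apply, Submodule.starProjection_singleton,
      RCLike.ofReal_real_eq_id, id, norm_smul, mul_pow, Real.norm_eq_abs, sq_abs, div_pow]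
    rcases eq_or_ne ‖v‖ 0 with hv | hv
    · simp [hv]
    · field_simp
  linarith [Submodule.norm_sq_eq_add_norm_sq_projection x (ℝ ∙ v)]

theorem norm_add_sq_eq_two {u v : H} (hu : ‖u‖ = 1) (hv : ‖v‖ = 1) (huv : ⟪u, v⟫ = 0) :
    ‖u + v‖ ^ 2 = 2 := by
  rw [sq, norm_add_sq_eq_norm_sq_add_norm_sq_real huv, hu, hv]
  norm_num

theorem doesNormRetrieval_orthogonal_span_singleton [FiniteDimensional ℝ H] {u v : H}
    (hu : ‖u‖ = 1) (hv : ‖v‖ = 1) (huv : ⟪u, v⟫ = 0) :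
    DoesNormRetrieval fun i => (ℝ ∙ ![u, v, u + v] i)ᗮ := by
  intro x y h
  have key : ∀ i, ⟪![u, v, u + v] i, x⟫ ^ 2 / ‖![u, v, u + v] i‖ ^ 2
      - ⟪![u, v, u + v] i, y⟫ ^ 2 / ‖![u, v, u + v] i‖ ^ 2 = ‖x‖ ^ 2 - ‖y‖ ^ 2 := by
    intro i
    have := congrArg (· ^ 2) (h i)
    simp only [norm_sq_orthogonalProjectionOnto_orthogonal_span_singleton] at this
    linarith
  have h₀ := key 0
  have h₁ := key 1
  have h₂ := key 2
  simp only [Matrix.cons_val_zero, Matrix.cons_val_one, Matrix.cons_val_two, Matrix.head_cons,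
    Matrix.tail_cons, inner_add_left, hu, hv, norm_add_sq_eq_two hu hv huv] at h₀ h₁ h₂
  have hsq : ‖x‖ ^ 2 - ‖y‖ ^ 2 = 0 :=
    eq_zero_of_sq_sub_sq_eq (by simpa using h₀) (by simpa using h₁) (by linarith)
  exact (pow_left_inj₀ (norm_nonneg x) (norm_nonneg y) two_ne_zero).mp (sub_eq_zero.mp hsq)

end

/-- For every `N ≥ 2` there are three proper subspaces of `ℝ^N` of codimension one which
do norm retrieval. -/
theorem stmt_7 (N : ℕ) (hN : 2 ≤ N) :
    ∃ W : Fin 3 → Submodule ℝ (EuclideanSpace ℝ (Fin N)),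
      (∀ i, W i ≠ ⊤) ∧ (∀ i, Module.finrank ℝ (W i) = N - 1) ∧ DoesNormRetrieval W := by
  have : Fact (Module.finrank ℝ (EuclideanSpace ℝ (Fin N)) = N - 1 + 1) := ⟨by simp; omega⟩
  set u := EuclideanSpace.single (⟨0, by omega⟩ : Fin N) (1 : ℝ)
  set v := EuclideanSpace.single (⟨1, by omega⟩ : Fin N) (1 : ℝ)
  have hu : ‖u‖ = 1 := by simp [u]
  have hv : ‖v‖ = 1 := by simp [v]
  have huv : ⟪u, v⟫ = 0 := by simp [u, v, EuclideanSpace.inner_single_left]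
  have hw : ∀ i, ![u, v, u + v] i ≠ 0 := by
    intro i
    rw [← norm_ne_zero_iff]
    fin_cases i
    · simp [hu]
    · simp [hv]
    · simp [← sq_eq_zero_iff.not, norm_add_sq_eq_two hu hv huv]
  refine ⟨fun i => (ℝ ∙ ![u, v, u + v] i)ᗮ, fun i => ?_,
    fun i => Submodule.finrank_orthogonal_span_singleton (hw i),
    doesNormRetrieval_orthogonal_span_singleton hu hv huv⟩
  rw [Ne, Submodule.orthogonal_eq_top_iff, Submodule.span_singleton_eq_bot]
  exact hw i
end
end

section
/- Let N, L, M be positive integers and let k_1,...,k_M be positive integers with k_i ≤ N for each i and ∑_{i=1}^M k_i = L·N. Then there exist subspaces {W_i}_{i=1}^M of ℝ^N with dim W_i = k_i for each i such that the family {W_i}_{i=1}^M does norm retrieval. -/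
/-!
Lay blocks of lengths `k₁, …, k_M` end to end along `ℕ` and wrap them around `Fin N`. Since
`kᵢ ≤ N`, block `i` consists of `kᵢ` distinct coordinates, and since the total length is `L·N`,
every coordinate is covered exactly `L` times. Taking `Wᵢ` to be spanned by the coordinate vectors
of block `i` gives `∑ ‖Pᵢ x‖² = L ‖x‖²`, so the norms `‖Pᵢ x‖` determine `‖x‖`.
-/

open scoped RealInnerProductSpace

noncomputable section

open Finset

theorem doesNormRetrieval_of_sum_norm_sq_eq {H ι : Type*} [NormedAddCommGroup H]
    [InnerProductSpace ℝ H] [FiniteDimensional ℝ H] [Fintype ι] (W : ι → Submodule ℝ H)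
    {c : ℝ} (hc : c ≠ 0)
    (h : ∀ x, ∑ i, ‖(W i).orthogonalProjectionOnto x‖ ^ 2 = c * ‖x‖ ^ 2) :
    DoesNormRetrieval W := by
  intro x y hxy
  have hsq : c * ‖x‖ ^ 2 = c * ‖y‖ ^ 2 := by simp only [← h, hxy]
  exact (pow_left_inj₀ (norm_nonneg x) (norm_nonneg y) two_ne_zero).mp
    (mul_left_cancel₀ hc hsq)

theorem OrthonormalBasis.norm_orthogonalProjectionOnto_sq {E ι : Type*} [NormedAddCommGroup E]
    [InnerProductSpace ℝ E] [Fintype ι] {U : Submodule ℝ E} [U.HasOrthogonalProjection]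
    (b : OrthonormalBasis ι ℝ U) (x : E) :
    ‖U.orthogonalProjectionOnto x‖ ^ 2 = ∑ i, ⟪(b i : E), x⟫ ^ 2 := by
  simp only [← b.sum_sq_inner_right, Submodule.inner_orthogonalProjectionOnto_eq_of_mem_left]

namespace EuclideanSpace

variable {n : Type*} [Fintype n] [DecidableEq n]

def coordSubspace (S : Finset n) : Submodule ℝ (EuclideanSpace ℝ n) :=
  Submodule.span ℝ (S.image (fun j ↦ single j (1 : ℝ)) : Set (EuclideanSpace ℝ n))

def coordSubspaceBasis (S : Finset n) : OrthonormalBasis S ℝ (coordSubspace S) :=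
  OrthonormalBasis.span (𝕜 := ℝ) orthonormal_single S

theorem coordSubspaceBasis_apply (S : Finset n) (j : S) :
    (coordSubspaceBasis S j : EuclideanSpace ℝ n) = single (j : n) 1 :=
  OrthonormalBasis.span_apply _ _ _

theorem finrank_coordSubspace (S : Finset n) : Module.finrank ℝ (coordSubspace S) = #S := by
  rw [Module.finrank_eq_card_basis (coordSubspaceBasis S).toBasis, Fintype.card_coe]

theorem norm_orthogonalProjectionOnto_coordSubspace_sq (S : Finset n) (x : EuclideanSpace ℝ n) :
    ‖(coordSubspace S).orthogonalProjectionOnto x‖ ^ 2 = ∑ j ∈ S, x j ^ 2 := by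
  rw [(coordSubspaceBasis S).norm_orthogonalProjectionOnto_sq, ← sum_coe_sort S]
  refine sum_congr rfl fun j _ ↦ ?_
  rw [coordSubspaceBasis_apply, inner_single_left]
  simp

end EuclideanSpace

theorem sum_comp_ofNat_fin_mul {A : Type*} [AddCommMonoid A] (L N : ℕ) [NeZero N]
    (f : Fin N → A) : ∑ t : Fin (L * N), f (Fin.ofNat N t) = L • ∑ j, f j := by
  have hofNat (p : Fin L × Fin N) : Fin.ofNat N (finProdFinEquiv p) = p.2 := by
    ext
    simp [Nat.add_mul_mod_self_left, Nat.mod_eq_of_lt p.2.2]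
  simp only [← finProdFinEquiv.sum_comp, Fintype.sum_prod_type, hofNat, sum_const, card_univ,
    Fintype.card_fin]

section CyclicBlocks

variable {M : ℕ} (N : ℕ) [NeZero N] (k : Fin M → ℕ)

/-- The place of the `j`-th entry of block `i`, when blocks of lengths `k` are laid end to end
and wrapped around `Fin N`. -/
def cyclicPos (i : Fin M) (j : Fin (k i)) : Fin N :=
  Fin.ofNat N (finSigmaFinEquiv ⟨i, j⟩)

def cyclicBlock (i : Fin M) : Finset (Fin N) :=
  univ.image (cyclicPos N k i)

variable {N k}

theorem cyclicPos_injective (hkN : ∀ i, k i ≤ N) (i : Fin M) :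
    Function.Injective (cyclicPos N k i) := by
  intro j₁ j₂ h
  have hmod := congrArg Fin.val h
  simp only [cyclicPos, Fin.val_ofNat, finSigmaFinEquiv_apply] at hmod
  exact Fin.ext <| (Nat.ModEq.add_left_cancel' _ hmod).eq_of_lt_of_lt
    (j₁.2.trans_le (hkN i)) (j₂.2.trans_le (hkN i))

theorem card_cyclicBlock (hkN : ∀ i, k i ≤ N) (i : Fin M) : #(cyclicBlock N k i) = k i := by
  rw [cyclicBlock, card_image_of_injective _ (cyclicPos_injective hkN i), card_univ,
    Fintype.card_fin]

theorem sum_sum_cyclicBlock {A : Type*} [AddCommMonoid A] {L : ℕ} (hkN : ∀ i, k i ≤ N)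
    (hsum : ∑ i, k i = L * N) (f : Fin N → A) :
    ∑ i, ∑ j ∈ cyclicBlock N k i, f j = L • ∑ j, f j := by
  simp only [cyclicBlock, sum_image fun j₁ _ j₂ _ h ↦ cyclicPos_injective hkN _ h, cyclicPos]
  rw [← Fintype.sum_sigma fun p ↦ f (Fin.ofNat N (finSigmaFinEquiv p)),
    finSigmaFinEquiv.sum_comp fun t ↦ f (Fin.ofNat N t),
    Fin.sum_univ_eq_sum_range fun t ↦ f (Fin.ofNat N t), hsum, ← Fin.sum_univ_eq_sum_range,
    sum_comp_ofNat_fin_mul]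

end CyclicBlocks

theorem stmt_9_general (N L M : ℕ) (hN : 0 < N) (hL : 0 < L)
    (k : Fin M → ℕ) (hkN : ∀ i, k i ≤ N)
    (hsum : ∑ i : Fin M, k i = L * N) :
    ∃ W : Fin M → Submodule ℝ (EuclideanSpace ℝ (Fin N)),
      (∀ i, Module.finrank ℝ (W i) = k i) ∧ DoesNormRetrieval W := by
  have : NeZero N := ⟨hN.ne'⟩
  refine ⟨fun i ↦ EuclideanSpace.coordSubspace (cyclicBlock N k i),
    fun i ↦ by rw [EuclideanSpace.finrank_coordSubspace, card_cyclicBlock hkN], ?_⟩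
  refine doesNormRetrieval_of_sum_norm_sq_eq _ (c := L) (by positivity) fun x ↦ ?_
  rw [EuclideanSpace.real_norm_sq_eq, ← nsmul_eq_mul, ← sum_sum_cyclicBlock hkN hsum]
  simp only [EuclideanSpace.norm_orthogonalProjectionOnto_coordSubspace_sq]

/-- If `∑_{i=1}^M k_i = L·N` with `0 < k_i ≤ N`, then there exist subspaces
`{W_i}_{i=1}^M` of `ℝ^N` with `dim W_i = k_i` doing norm retrieval. -/
theorem stmt_9 (N L M : ℕ) (hN : 0 < N) (hL : 0 < L) (hM : 0 < M)
    (k : Fin M → ℕ) (hk : ∀ i, 0 < k i) (hkN : ∀ i, k i ≤ N)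
    (hsum : ∑ i : Fin M, k i = L * N) :
    ∃ W : Fin M → Submodule ℝ (EuclideanSpace ℝ (Fin N)),
      (∀ i, Module.finrank ℝ (W i) = k i) ∧ DoesNormRetrieval W :=
  stmt_9_general N L M hN hL k hkN hsum
end
end

section
/- Let {P_i}_{i=1}^M be orthogonal projections on a finite-dimensional real inner product space H. If there exist real numbers a_1,...,a_M such that ∑_{i=1}^M a_i P_i = I (the identity operator on H), then {P_i}_{i=1}^M does norm retrieval. -/
open scoped RealInnerProductSpace

noncomputable section

namespace Submodule

variable {E : Type*} [NormedAddCommGroup E] [InnerProductSpace ℝ E]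

theorem real_inner_orthogonalProjectionOnto_self (K : Submodule ℝ E) [K.HasOrthogonalProjection]
    (x : E) : ⟪(K.orthogonalProjectionOnto x : E), x⟫ = ‖K.orthogonalProjectionOnto x‖ ^ 2 := by
  rw [← inner_orthogonalProjectionOnto_eq_of_mem_left, real_inner_self_eq_norm_sq]

theorem norm_sq_eq_sum_smul_norm_orthogonalProjectionOnto_sq {ι : Type*} [Fintype ι]
    (W : ι → Submodule ℝ E) [∀ i, (W i).HasOrthogonalProjection] (a : ι → ℝ)
    (hsum : ∑ i, a i • ((W i).subtypeL ∘L (W i).orthogonalProjectionOnto) =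
      ContinuousLinearMap.id ℝ E) (x : E) :
    ‖x‖ ^ 2 = ∑ i, a i * ‖(W i).orthogonalProjectionOnto x‖ ^ 2 :=
  calc ‖x‖ ^ 2 = ⟪(∑ i, a i • ((W i).subtypeL ∘L (W i).orthogonalProjectionOnto)) x, x⟫ := by
        rw [hsum, ContinuousLinearMap.id_apply, real_inner_self_eq_norm_sq]
    _ = ∑ i, a i * ⟪((W i).orthogonalProjectionOnto x : E), x⟫ := by
        simp [sum_inner, real_inner_smul_left]
    _ = ∑ i, a i * ‖(W i).orthogonalProjectionOnto x‖ ^ 2 := by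
        simp only [real_inner_orthogonalProjectionOnto_self]

end Submodule

/-- If the orthogonal projections `{P_i}_{i=1}^M` onto subspaces `{W_i}_{i=1}^M` satisfy
`∑ a_i P_i = I` for some real numbers `a_i`, then `{P_i}_{i=1}^M` does norm retrieval. -/
theorem stmt_13 {H : Type*} [NormedAddCommGroup H] [InnerProductSpace ℝ H]
    [FiniteDimensional ℝ H] {M : ℕ}
    (W : Fin M → Submodule ℝ H) (a : Fin M → ℝ)
    (hsum : ∑ i : Fin M, a i • ((W i).subtypeL ∘L Submodule.orthogonalProjectionOnto (W i)) =
      ContinuousLinearMap.id ℝ H) :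
    DoesNormRetrieval W := by
  intro x y hxy
  have hsq : ‖x‖ ^ 2 = ‖y‖ ^ 2 := by
    simp only [Submodule.norm_sq_eq_sum_smul_norm_orthogonalProjectionOnto_sq W a hsum, hxy]
  exact (sq_eq_sq₀ (norm_nonneg x) (norm_nonneg y)).mp hsq
end
end

section
/- Let {P_i}_{i=1}^L be orthogonal projections on a finite-dimensional real inner product space H. If there exist real numbers a_1,...,a_L such that ∑_{i=1}^L a_i P_i = I and ∑_{i=1}^L a_i ≠ 1, then the family of complementary projections {I - P_i}_{i=1}^L does norm retrieval. -/
open scoped RealInnerProductSpace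

noncomputable section

/-! Pairing `∑ aᵢ Pᵢ = I` with `x` gives `‖x‖² = ∑ aᵢ ‖Pᵢ x‖²`. By Pythagoras
`‖Pᵢ x‖² = ‖x‖² - ‖(I - Pᵢ) x‖²`, so `(∑ aᵢ - 1) ‖x‖² = ∑ aᵢ ‖(I - Pᵢ) x‖²`: when `∑ aᵢ ≠ 1`
the norm of `x` is an explicit function of the norms `‖(I - Pᵢ) x‖`. -/

namespace Submodule

variable {ι E : Type*} [Fintype ι] [NormedAddCommGroup E] [InnerProductSpace ℝ E]
  (W : ι → Submodule ℝ E) [∀ i, (W i).HasOrthogonalProjection] (a : ι → ℝ)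

theorem norm_sq_eq_sum_mul_norm_sq_orthogonalProjectionOnto
    (hsum : ∑ i, a i • (W i).starProjection = ContinuousLinearMap.id ℝ E) (x : E) :
    ‖x‖ ^ 2 = ∑ i, a i * ‖(W i).orthogonalProjectionOnto x‖ ^ 2 :=
  calc ‖x‖ ^ 2 = ⟪(∑ i, a i • (W i).starProjection) x, x⟫ := by
        rw [hsum, ContinuousLinearMap.id_apply, real_inner_self_eq_norm_sq]
    _ = ∑ i, a i * ⟪(W i).starProjection x, x⟫ := by
        simp only [sum_apply, smul_apply, sum_inner,
          real_inner_smul_left]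
    _ = ∑ i, a i * ‖(W i).orthogonalProjectionOnto x‖ ^ 2 := by
        simp only [← re_inner_starProjection_eq_normSq, RCLike.re_to_real]

theorem sum_sub_one_mul_norm_sq_eq_sum_mul_norm_sq_orthogonalProjectionOnto_orthogonal
    (hsum : ∑ i, a i • (W i).starProjection = ContinuousLinearMap.id ℝ E) (x : E) :
    (∑ i, a i - 1) * ‖x‖ ^ 2 = ∑ i, a i * ‖(W i)ᗮ.orthogonalProjectionOnto x‖ ^ 2 := by
  have hpyth (i : ι) : ‖(W i)ᗮ.orthogonalProjectionOnto x‖ ^ 2 =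
      ‖x‖ ^ 2 - ‖(W i).orthogonalProjectionOnto x‖ ^ 2 := by
    rw [norm_sq_eq_add_norm_sq_projection x (W i)]
    ring
  simp only [hpyth, mul_sub, Finset.sum_sub_distrib, ← Finset.sum_mul,
    ← norm_sq_eq_sum_mul_norm_sq_orthogonalProjectionOnto W a hsum x]
  ring

end Submodule

/-- If the orthogonal projections `{P_i}_{i=1}^L` onto subspaces `{W_i}_{i=1}^L` satisfy
`∑ a_i P_i = I` with `∑ a_i ≠ 1`, then the complementary projections `{I - P_i}_{i=1}^L`
(i.e. the orthogonal projections onto `{W_i^⊥}_{i=1}^L`) do norm retrieval. -/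
theorem stmt_14 {H : Type*} [NormedAddCommGroup H] [InnerProductSpace ℝ H]
    [FiniteDimensional ℝ H] {L : ℕ}
    (W : Fin L → Submodule ℝ H) (a : Fin L → ℝ)
    (hsum : ∑ i : Fin L, a i • ((W i).subtypeL ∘L Submodule.orthogonalProjectionOnto (W i)) =
      ContinuousLinearMap.id ℝ H)
    (ha : ∑ i : Fin L, a i ≠ 1) :
    DoesNormRetrieval (fun i => (W i)ᗮ) := by
  intro x y h
  have hsq : (∑ i, a i - 1) * ‖x‖ ^ 2 = (∑ i, a i - 1) * ‖y‖ ^ 2 := by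
    simp only [Submodule.sum_sub_one_mul_norm_sq_eq_sum_mul_norm_sq_orthogonalProjectionOnto_orthogonal
      W a hsum, h]
  exact (sq_eq_sq₀ (norm_nonneg x) (norm_nonneg y)).mp
    (mul_left_cancel₀ (sub_ne_zero.mpr ha) hsq)
end
end
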